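/- arXiv:1304.4635 — 5 statements merged into one kernel-verified Lean document; each statement's English description precedes it below -/
import Mathlib

section
/- Over ℤ/2ℤ, the 4-blocks 1101 and 1011 never occur as four consecutive coefficients of any power of 1+X, and every other element of (ZMod 2)^4 does occur; hence the number of accessible 4-blocks for 1+X mod 2 is 14. -/
open Polynomial

/-- A 4-block `b` is accessible for `1+X` mod 2 if it occurs as four consecutive
coefficients of some power of `1+X` in `(ZMod 2)[X]`. -/
def Accessible4 (b : Fin 4 → ZMod 2) : Prop :=
  ∃ k j : ℕ, ∀ i : Fin 4, ((1 + X : Polynomial (ZMod 2)) ^ k).coeff (j + i) = b i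

lemma acc_of (k j : ℕ) (b : Fin 4 → ZMod 2)
    (h : ∀ i : Fin 4, ((k.choose (j + i) : ZMod 2)) = b i) : Accessible4 b :=
  ⟨k, j, fun i => by rw [coeff_one_add_X_pow]; exact h i⟩

lemma key (k t : ℕ) :
    ((k.choose (2 * t + 1) : ZMod 2)) = (k : ZMod 2) * (k.choose (2 * t) : ZMod 2) := by
  rcases le_or_gt (2 * t) k with hle | hlt
  · have h := Nat.choose_succ_right_eq k (2 * t)
    have := congrArg (fun n : ℕ => (n : ZMod 2)) h
    push_cast [Nat.cast_sub hle] at this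
    rw [show ((2 : ZMod 2)) = 0 from rfl] at this
    simpa [mul_comm] using this
  · rw [Nat.choose_eq_zero_of_lt hlt,
      Nat.choose_eq_zero_of_lt (lt_trans hlt (Nat.lt_succ_self _))]
    simp

lemma acc_coeffs {b : Fin 4 → ZMod 2} (h : Accessible4 b) :
    ∃ k j : ℕ, ∀ i : Fin 4, ((k.choose (j + i) : ZMod 2)) = b i := by
  obtain ⟨k, j, h⟩ := h
  exact ⟨k, j, fun i => by rw [← coeff_one_add_X_pow (ZMod 2)]; exact h i⟩

lemma not1101 : ¬ Accessible4 ![1, 1, 0, 1] := by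
  intro h
  obtain ⟨k, j, h⟩ := acc_coeffs h
  have h0 := h 0; have h1 := h 1; have h2 := h 2; have h3 := h 3
  simp only [Fin.isValue, Matrix.cons_val_zero, Matrix.cons_val_one, Matrix.head_cons,
    Matrix.cons_val_two, Matrix.tail_cons, Matrix.cons_val_three] at h0 h1 h2 h3
  have hk : (k : ZMod 2) = 0 ∨ (k : ZMod 2) = 1 := by
    generalize (k : ZMod 2) = x; revert x; decide
  rcases Nat.even_or_odd j with ⟨t, ht⟩ | ⟨t, ht⟩
  · -- j = 2t, coeffs at 2t,2t+1,2t+2,2t+3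
    have k1 := key k (t + 1)
    rcases hk with hk | hk <;> rw [hk] at k1
    · rw [show 2 * (t + 1) + 1 = j + (3 : Fin 4) by omega] at k1
      rw [h3] at k1; simp at k1
    · rw [show 2 * (t + 1) + 1 = j + (3 : Fin 4) by omega,
        show 2 * (t + 1) = j + (2 : Fin 4) by omega] at k1
      rw [h3, h2] at k1; simp at k1
  · -- j = 2t+1
    have k0 := key k t
    have k1 := key k (t + 1)
    rcases hk with hk | hk <;> rw [hk] at k0 k1
    · rw [show 2 * t + 1 = j + (0 : Fin 4) by omega] at k0
      rw [h0] at k0; simp at k0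
    · rw [show 2 * (t + 1) + 1 = j + (2 : Fin 4) by omega,
        show 2 * (t + 1) = j + (1 : Fin 4) by omega] at k1
      rw [h2, h1] at k1; simp at k1

lemma not1011 : ¬ Accessible4 ![1, 0, 1, 1] := by
  intro h
  obtain ⟨k, j, h⟩ := acc_coeffs h
  have h0 := h 0; have h1 := h 1; have h2 := h 2; have h3 := h 3
  simp only [Fin.isValue, Matrix.cons_val_zero, Matrix.cons_val_one, Matrix.head_cons,
    Matrix.cons_val_two, Matrix.tail_cons, Matrix.cons_val_three] at h0 h1 h2 h3
  have hk : (k : ZMod 2) = 0 ∨ (k : ZMod 2) = 1 := by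
    generalize (k : ZMod 2) = x; revert x; decide
  rcases Nat.even_or_odd j with ⟨t, ht⟩ | ⟨t, ht⟩
  · have k0 := key k t
    have k1 := key k (t + 1)
    rcases hk with hk | hk <;> rw [hk] at k0 k1
    · rw [show 2 * (t + 1) + 1 = j + (3 : Fin 4) by omega] at k1
      rw [h3] at k1; simp at k1
    · rw [show 2 * t + 1 = j + (1 : Fin 4) by omega,
        show 2 * t = j + (0 : Fin 4) by omega] at k0
      rw [h1, h0] at k0; simp at k0
  · have k0 := key k t
    have k1 := key k (t + 1)
    rcases hk with hk | hk <;> rw [hk] at k0 k1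
    · rw [show 2 * t + 1 = j + (0 : Fin 4) by omega] at k0
      rw [h0] at k0; simp at k0
    · rw [show 2 * (t + 1) + 1 = j + (2 : Fin 4) by omega,
        show 2 * (t + 1) = j + (1 : Fin 4) by omega] at k1
      rw [h2, h1] at k1; simp at k1

lemma all_acc : ∀ b : Fin 4 → ZMod 2, b ≠ ![1, 1, 0, 1] → b ≠ ![1, 0, 1, 1] → Accessible4 b := by
  intro b hb1 hb2
  have hb : b = ![b 0, b 1, b 2, b 3] := by
    funext i; fin_cases i <;> rfl
  rw [hb] at hb1 hb2 ⊢
  have two : ∀ x : ZMod 2, x = 0 ∨ x = 1 := by decide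
  rcases two (b 0) with h0 | h0 <;> rcases two (b 1) with h1 | h1 <;>
    rcases two (b 2) with h2 | h2 <;> rcases two (b 3) with h3 | h3 <;>
    rw [h0, h1, h2, h3] at hb1 hb2 ⊢ <;>
    first
    | exact absurd rfl hb1
    | exact absurd rfl hb2
    | exact acc_of 0 1 _ (by decide)   -- 0000
    | exact acc_of 4 1 _ (by decide)   -- 0001
    | exact acc_of 4 2 _ (by decide)   -- 0010
    | exact acc_of 5 2 _ (by decide)   -- 0011
    | exact acc_of 4 3 _ (by decide)   -- 0100
    | exact acc_of 6 1 _ (by decide)   -- 0101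
    | exact acc_of 5 3 _ (by decide)   -- 0110
    | exact acc_of 11 7 _ (by decide)  -- 0111
    | exact acc_of 0 0 _ (by decide)   -- 1000
    | exact acc_of 5 1 _ (by decide)   -- 1001
    | exact acc_of 6 0 _ (by decide)   -- 1010
    | exact acc_of 1 0 _ (by decide)   -- 1100
    | exact acc_of 3 1 _ (by decide)   -- 1110
    | exact acc_of 3 0 _ (by decide)   -- 1111

theorem accessible_four_blocks :
    ¬ Accessible4 ![1, 1, 0, 1] ∧ ¬ Accessible4 ![1, 0, 1, 1] ∧
    (∀ b : Fin 4 → ZMod 2, b ≠ ![1, 1, 0, 1] → b ≠ ![1, 0, 1, 1] → Accessible4 b) ∧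
    {b : Fin 4 → ZMod 2 | Accessible4 b}.ncard = 14 := by
  refine ⟨not1101, not1011, all_acc, ?_⟩
  have hset : {b : Fin 4 → ZMod 2 | Accessible4 b} =
      ({![1, 1, 0, 1], ![1, 0, 1, 1]} : Set (Fin 4 → ZMod 2))ᶜ := by
    ext b
    simp only [Set.mem_setOf_eq, Set.mem_compl_iff, Set.mem_insert_iff, Set.mem_singleton_iff]
    constructor
    · rintro h (rfl | rfl)
      · exact not1101 h
      · exact not1011 h
    · intro h
      push_neg at h
      exact all_acc b h.1 h.2
  rw [hset]
  rw [Set.ncard_eq_toFinset_card']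
  decide
end

section
/- For every quadruple (b₀,b₁,b₂,b₃) ∈ (ZMod 2)^4 other than (1,1,0,1) and (1,0,1,1), there exist k and j such that the coefficients of (1+X)^k at positions j, j+1, j+2, j+3 equal b₀, b₁, b₂, b₃ respectively. -/
/-! The coefficient of `X ^ j` in `(1 + X) ^ k` is `k.choose j` reduced mod 2, so the blocks in
question are windows of length four in the rows of Pascal's triangle mod 2. Every admissible block
already occurs in a row `k ≤ 11` at an offset `j ≤ 7` (the last to appear is `0111`, at `k = 11`,
`j = 7`), so a finite search settles the claim. -/

open Polynomial

theorem exists_choose_window_zmod_two (b : Fin 4 → ZMod 2)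
    (h1 : b ≠ ![1, 1, 0, 1]) (h2 : b ≠ ![1, 0, 1, 1]) :
    ∃ k < 12, ∃ j < 8, ∀ i : Fin 4, (k.choose (j + i) : ZMod 2) = b i := by
  revert b
  decide

theorem fourteen_blocks_accessible (b : Fin 4 → ZMod 2)
    (h1 : b ≠ ![1, 1, 0, 1]) (h2 : b ≠ ![1, 0, 1, 1]) :
    ∃ k j : ℕ, ∀ i : Fin 4, ((1 + X : Polynomial (ZMod 2)) ^ k).coeff (j + i) = b i := by
  obtain ⟨k, -, j, -, hwindow⟩ := exists_choose_window_zmod_two b h1 h2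
  exact ⟨k, j, by simpa only [coeff_one_add_X_pow] using hwindow⟩
end

section
/- The string 1101 does not occur among consecutive coefficients of any power of (1+X) over ℤ/2ℤ: there are no k, j with coeff_j = 1, coeff_{j+1} = 1, coeff_{j+2} = 0, coeff_{j+3} = 1 in (1+X)^k. -/
/-!
Mod 2, `C(k, 2m + 1) = k · C(k, 2m)`: every coefficient at an odd position of `(1 + X)^k` is
`0` when `k` is even and repeats its left neighbour when `k` is odd. For even `j`, the pattern
`1101` would need a `1` after a `0` at positions `j + 2, j + 3`; for odd `j`, the `1` at `j`
forces `k` odd, and then positions `j + 1, j + 2` cannot read `10`.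
-/

open Polynomial

/-- Reduction of `C(k, i + 1) * (i + 1) = C(k, i) * (k - i)` at `i = 2m`. -/
theorem CharTwo.natCast_choose_two_mul_add_one {R : Type*} [CommRing R] [CharP R 2] (k m : ℕ) :
    (k.choose (2 * m + 1) : R) = k * k.choose (2 * m) := by
  by_cases hle : 2 * m ≤ k
  · have h := congrArg (Nat.cast : ℕ → R) (Nat.choose_succ_right_eq k (2 * m))
    push_cast [Nat.cast_sub hle, CharTwo.two_eq_zero] at h
    linear_combination h
  · rw [Nat.choose_eq_zero_of_lt (by omega), Nat.choose_eq_zero_of_lt (by omega)]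
    simp

theorem CharTwo.coeff_one_add_X_pow_two_mul_add_one {R : Type*} [CommRing R] [CharP R 2]
    (k m : ℕ) :
    ((1 + X : R[X]) ^ k).coeff (2 * m + 1) = k * ((1 + X : R[X]) ^ k).coeff (2 * m) := by
  simp only [coeff_one_add_X_pow, natCast_choose_two_mul_add_one]

theorem block_1101_not_accessible :
    ¬ ∃ k j : ℕ,
      ((1 + X : Polynomial (ZMod 2)) ^ k).coeff j = 1 ∧
      ((1 + X : Polynomial (ZMod 2)) ^ k).coeff (j + 1) = 1 ∧
      ((1 + X : Polynomial (ZMod 2)) ^ k).coeff (j + 2) = 0 ∧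
      ((1 + X : Polynomial (ZMod 2)) ^ k).coeff (j + 3) = 1 := by
  rintro ⟨k, j, h0, h1, h2, h3⟩
  obtain ⟨m, rfl | rfl⟩ := Nat.even_or_odd' j
  · have h := CharTwo.coeff_one_add_X_pow_two_mul_add_one (R := ZMod 2) k (m + 1)
    rw [show 2 * (m + 1) + 1 = 2 * m + 3 by ring, show 2 * (m + 1) = 2 * m + 2 by ring,
      h2, h3, mul_zero] at h
    exact one_ne_zero h
  · have hk := CharTwo.coeff_one_add_X_pow_two_mul_add_one (R := ZMod 2) k (m + 1)
    rw [show 2 * (m + 1) + 1 = 2 * m + 1 + 2 by ring, show 2 * (m + 1) = 2 * m + 1 + 1 by ring,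
      h2, h1, mul_one] at hk
    have h := CharTwo.coeff_one_add_X_pow_two_mul_add_one (R := ZMod 2) k m
    rw [h0, ← hk, zero_mul] at h
    exact one_ne_zero h
end

section
/- For p = 2 and f = 1 + X, the number of nonzero coefficients of (1+X)^n over ℤ/2ℤ satisfies r(2m) = 3·r(m), where r(n) = Σ_{i=0}^{n−1} q(i) and q(i) is the number of nonzero coefficients of (1+X)^i mod 2. Consequently r(2^k) = 3^k. -/
open Polynomial Finset

/-! Over `ZMod 2`, `(1 + X) ^ (2 * i) = expand 2 ((1 + X) ^ i)` by Frobenius, and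
`(1 + X) ^ (2 * i + 1)` is that plus its shift by `X`; the two summands live on the even and
the odd exponents respectively. Hence `q (2 * i) = q i` and `q (2 * i + 1) = 2 * q i`, so pairing
the terms of `r (2 * m)` as `q (2 * i) + q (2 * i + 1) = 3 * q i` gives `r (2 * m) = 3 * r m`. -/
theorem Finset.sum_range_two_mul {M : Type*} [AddCommMonoid M] (f : ℕ → M) (m : ℕ) :
    ∑ i ∈ range (2 * m), f i = ∑ i ∈ range m, (f (2 * i) + f (2 * i + 1)) := by
  induction m with
  | zero => simp
  | succ m ih => rw [Nat.mul_succ, sum_range_succ, sum_range_succ, sum_range_succ, ih, add_assoc]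

section
variable {R : Type*} [CommSemiring R] (P Q : R[X])

theorem coeff_X_mul_expand_two_two_mul (n : ℕ) : (X * expand R 2 Q).coeff (2 * n) = 0 := by
  cases n with
  | zero => exact coeff_X_mul_zero _
  | succ n =>
    rw [show 2 * (n + 1) = 2 * n + 1 + 1 by ring, coeff_X_mul, coeff_expand two_pos,
      if_neg (by omega)]

theorem coeff_expand_two_add_X_mul_two_mul (n : ℕ) :
    (expand R 2 P + X * expand R 2 Q).coeff (2 * n) = P.coeff n := by
  rw [coeff_add, coeff_expand_mul' two_pos, coeff_X_mul_expand_two_two_mul, add_zero]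

theorem coeff_expand_two_add_X_mul_two_mul_add_one (n : ℕ) :
    (expand R 2 P + X * expand R 2 Q).coeff (2 * n + 1) = Q.coeff n := by
  rw [coeff_add, coeff_X_mul, coeff_expand_mul' two_pos, coeff_expand two_pos, if_neg (by omega),
    zero_add]

theorem support_expand_two_add_X_mul :
    (expand R 2 P + X * expand R 2 Q).support =
      P.support.image (2 * ·) ∪ Q.support.image (2 * · + 1) := by
  ext n
  obtain ⟨k, rfl | rfl⟩ := Nat.even_or_odd' n
  · rw [mem_support_iff, coeff_expand_two_add_X_mul_two_mul]
    simp only [mem_union, mem_image, mem_support_iff, Nat.mul_left_cancel_iff two_pos,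
      exists_eq_right]
    grind
  · rw [mem_support_iff, coeff_expand_two_add_X_mul_two_mul_add_one]
    simp only [mem_union, mem_image, mem_support_iff, Nat.add_right_cancel_iff,
      Nat.mul_left_cancel_iff two_pos, exists_eq_right]
    grind

theorem card_support_expand_two_add_X_mul :
    (expand R 2 P + X * expand R 2 Q).support.card = P.support.card + Q.support.card := by
  rw [support_expand_two_add_X_mul, card_union_of_disjoint,
    card_image_of_injective _ (fun a b h => by omega),
    card_image_of_injective _ (fun a b h => by omega)]
  rw [disjoint_left]
  simp only [mem_image]
  rintro n ⟨a, _, rfl⟩ ⟨b, _, h⟩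
  omega
end

theorem one_add_X_pow_two_mul (i : ℕ) :
    (1 + X : (ZMod 2)[X]) ^ (2 * i) = expand (ZMod 2) 2 ((1 + X) ^ i) := by
  rw [ZMod.expand_card, ← pow_mul, mul_comm]

theorem one_add_X_pow_two_mul_add_one (i : ℕ) :
    (1 + X : (ZMod 2)[X]) ^ (2 * i + 1) =
      expand (ZMod 2) 2 ((1 + X) ^ i) + X * expand (ZMod 2) 2 ((1 + X) ^ i) := by
  rw [pow_succ, one_add_X_pow_two_mul]; ring

theorem card_support_one_add_X_pow_two_mul (i : ℕ) :
    ((1 + X : (ZMod 2)[X]) ^ (2 * i)).support.card = ((1 + X : (ZMod 2)[X]) ^ i).support.card := by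
  have h := card_support_expand_two_add_X_mul ((1 + X : (ZMod 2)[X]) ^ i) 0
  rwa [map_zero, mul_zero, add_zero, support_zero, card_empty, add_zero,
    ← one_add_X_pow_two_mul] at h

theorem card_support_one_add_X_pow_two_mul_add_one (i : ℕ) :
    ((1 + X : (ZMod 2)[X]) ^ (2 * i + 1)).support.card =
      2 * ((1 + X : (ZMod 2)[X]) ^ i).support.card := by
  rw [one_add_X_pow_two_mul_add_one, card_support_expand_two_add_X_mul, two_mul]

theorem nonzero_count_doubling
    (q : ℕ → ℕ) (hq : ∀ i, q i = ((1 + X : Polynomial (ZMod 2)) ^ i).support.card)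
    (r : ℕ → ℕ) (hr : ∀ n, r n = ∑ i ∈ range n, q i) :
    (∀ m : ℕ, r (2 * m) = 3 * r m) ∧ (∀ k : ℕ, r (2 ^ k) = 3 ^ k) := by
  have hpair (i : ℕ) : q (2 * i) + q (2 * i + 1) = 3 * q i := by
    rw [hq, hq, hq, card_support_one_add_X_pow_two_mul, card_support_one_add_X_pow_two_mul_add_one]
    ring
  have hdouble (m : ℕ) : r (2 * m) = 3 * r m := by
    rw [hr, hr, sum_range_two_mul, mul_sum]
    exact sum_congr rfl fun i _ => hpair i
  refine ⟨hdouble, fun k => ?_⟩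
  induction k with
  | zero => rw [pow_zero, pow_zero, hr, sum_range_one, hq, pow_zero, ← C_1, support_C one_ne_zero,
      card_singleton]
  | succ k ih => rw [pow_succ', hdouble, ih, pow_succ']
end

section
/- The number of nonzero coefficients of (1+X)^i over ℤ/2ℤ equals 2 raised to the number of 1's in the binary representation of i. -/
/-!
Over `ZMod 2` squaring is `expand 2`, so for `i = 2k + b` we get
`(1 + X)^i = (1 + X)^b * expand 2 ((1 + X)^k)`. Expanding keeps the number of nonzero coefficients,
while multiplying an expanded polynomial by `1 + X` copies each (even-indexed) coefficient into the
following odd slot, doubling that number. So each binary digit `1` of `i` contributes a factor `2`.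
-/

open Polynomial

namespace Polynomial

variable {R : Type*} [CommSemiring R]

theorem support_expand {p : ℕ} (hp : 0 < p) (f : R[X]) :
    (expand R p f).support = f.support.image (p * ·) := by
  ext n
  simp only [mem_support_iff, Finset.mem_image, coeff_expand hp]
  constructor
  · intro h
    split_ifs at h with hdvd
    · obtain ⟨k, rfl⟩ := hdvd
      exact ⟨k, by rwa [Nat.mul_div_cancel_left k hp] at h, rfl⟩
    · exact absurd rfl h
  · rintro ⟨k, hk, rfl⟩
    rwa [if_pos (dvd_mul_right p k), Nat.mul_div_cancel_left k hp]

theorem card_support_expand {p : ℕ} (hp : 0 < p) (f : R[X]) :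
    (expand R p f).support.card = f.support.card := by
  rw [support_expand hp, Finset.card_image_of_injective _ (mul_right_injective₀ hp.ne')]

theorem coeff_one_add_X_mul_expand_two (g : R[X]) (n : ℕ) :
    ((1 + X) * expand R 2 g).coeff n = g.coeff (n / 2) := by
  rw [add_mul, one_mul, coeff_add]
  obtain ⟨k, rfl | rfl⟩ := Nat.even_or_odd' n
  · have hX : (X * expand R 2 g).coeff (2 * k) = 0 := by
      rcases k with _ | k
      · exact coeff_X_mul_zero _
      · rw [show 2 * (k + 1) = 2 * k + 1 + 1 by ring, coeff_X_mul, coeff_expand two_pos,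
          if_neg (by omega)]
    rw [hX, add_zero, coeff_expand_mul' two_pos, Nat.mul_div_cancel_left k two_pos]
  · rw [coeff_X_mul, coeff_expand_mul' two_pos, coeff_expand two_pos, if_neg (by omega), zero_add,
      show (2 * k + 1) / 2 = k by omega]

theorem support_one_add_X_mul_expand_two (g : R[X]) :
    ((1 + X) * expand R 2 g).support
      = (g.support ×ˢ Finset.univ).map (Nat.divModEquiv 2).symm.toEmbedding := by
  ext n
  simp [Finset.mem_map_equiv, coeff_one_add_X_mul_expand_two]

theorem card_support_one_add_X_mul_expand_two (g : R[X]) :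
    ((1 + X) * expand R 2 g).support.card = 2 * g.support.card := by
  rw [support_one_add_X_mul_expand_two, Finset.card_map, Finset.card_product, Finset.card_univ,
    Fintype.card_fin, mul_comm]

end Polynomial

namespace Nat

theorem count_one_digits_two_mul (n : ℕ) : (digits 2 (2 * n)).count 1 = (digits 2 n).count 1 := by
  rcases n.eq_zero_or_pos with rfl | hn
  · rfl
  · have hdigits := digits_add 2 one_lt_two 0 n two_pos (Or.inr hn.ne')
    rw [zero_add] at hdigits
    rw [hdigits, List.count_cons_of_ne zero_ne_one]

theorem count_one_digits_two_mul_add_one (n : ℕ) :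
    (digits 2 (2 * n + 1)).count 1 = (digits 2 n).count 1 + 1 := by
  rw [add_comm, digits_add 2 one_lt_two 1 n one_lt_two (Or.inl one_ne_zero), List.count_cons_self]

end Nat

theorem support_card_pow_one_add_X (i : ℕ) :
    ((1 + X : Polynomial (ZMod 2)) ^ i).support.card = 2 ^ ((Nat.digits 2 i).count 1) := by
  induction i using Nat.evenOddRec with
  | h0 => rw [pow_zero, ← C_1, support_C one_ne_zero]; rfl
  | h_even n ih =>
    rw [pow_mul', ← ZMod.expand_card, card_support_expand two_pos, ih, Nat.count_one_digits_two_mul]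
  | h_odd n ih =>
    rw [pow_succ', pow_mul', ← ZMod.expand_card, card_support_one_add_X_mul_expand_two, ih,
      Nat.count_one_digits_two_mul_add_one, pow_succ']
end
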